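/- As A → 0⁺, the normalized equilibrium measures μ_A with density proportional to exp(-(2/A²)(β|v|⁴/4 - α|v|²/2)) on ℝ² converge weakly to the uniform probability measure on the circle {|v| = √(α/β)}. -/

import Mathlib

open Real MeasureTheory

/-- A point on the circle of radius `√(α/β)` at angle `θ`. -/
noncomputable def circPt (α β θ : ℝ) : EuclideanSpace ℝ (Fin 2) :=
  WithLp.toLp 2 (fun i : Fin 2 => if i = 0 then Real.sqrt (α / β) * Real.cos θ else Real.sqrt (α / β) * Real.sin θ)

open Filter Set Topology

/-!
Write the density as `exp (-t V |v|)` with `t = 2 / A²` and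
`V r = β r⁴ / 4 - α r² / 2 = min V + (β / 4) (r² - α / β)²`. By Laplace's principle, the mass
outside any annulus around the circle `|v| = √(α / β)`, relative to the total mass, decays like
`exp (-c t)`. The weight is rotation invariant, so averaging `g` over rotations (Fubini) replaces it
by its circle average `H |v|`, which is continuous in the radius. Hence the normalized integral
tends to `H (√(α / β))`, the mean of `g` over the circle.
-/

section WeightedAverage

variable {X ι : Type*} [MeasurableSpace X] {μ : Measure X} {l : Filter ι}

theorem abs_weighted_average_sub_le {w : X → ℝ} {f : X → ℝ} {a C η : ℝ}
    (hw : 0 ≤ w) (hwi : Integrable w μ) (hZ : 0 < ∫ x, w x ∂μ)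
    (hf : Measurable f) (hfC : ∀ x, |f x| ≤ C) (hη : 0 ≤ η) :
    |(∫ x, w x ∂μ)⁻¹ * ∫ x, f x * w x ∂μ - a| ≤
      (C + |a|) * ((∫ x, w x ∂μ)⁻¹ * ∫ x in {x | η ≤ |f x - a|}, w x ∂μ) + η := by
  set S := {x | η ≤ |f x - a|}
  have hS : MeasurableSet S := measurableSet_le measurable_const ((hf.sub_const a).abs)
  have hfa : ∀ x, |f x - a| ≤ C + |a| := fun x => (abs_sub _ _).trans (by gcongr; exact hfC x)
  have hpt : ∀ x, |f x - a| * w x ≤ (C + |a|) * S.indicator w x + η * w x := by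
    intro x
    by_cases hx : x ∈ S
    · rw [indicator_of_mem hx]
      nlinarith [mul_nonneg (sub_nonneg.2 (hfa x)) (hw x), mul_nonneg hη (hw x)]
    · rw [indicator_of_notMem hx, mul_zero, zero_add]
      exact mul_le_mul_of_nonneg_right (not_le.1 hx).le (hw x)
  have hmul : ∀ {h : X → ℝ} {B : ℝ}, Measurable h → (∀ x, |h x| ≤ B) →
      Integrable (fun x => h x * w x) μ := fun hh hB =>
    hwi.bdd_mul hh.aestronglyMeasurable
      (Eventually.of_forall fun x => (hB x).trans_eq' (norm_eq_abs _))
  have hdiff : (∫ x, w x ∂μ)⁻¹ * ∫ x, f x * w x ∂μ - a =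
      (∫ x, w x ∂μ)⁻¹ * ∫ x, (f x - a) * w x ∂μ := by
    simp_rw [sub_mul, integral_sub (hmul hf hfC) (hwi.const_mul a), integral_const_mul]
    field_simp
  calc |(∫ x, w x ∂μ)⁻¹ * ∫ x, f x * w x ∂μ - a|
      ≤ (∫ x, w x ∂μ)⁻¹ * ∫ x, |f x - a| * w x ∂μ := by
        rw [hdiff, abs_mul, abs_inv, abs_of_pos hZ]
        gcongr
        refine (abs_integral_le_integral_abs).trans (le_of_eq ?_)
        simp_rw [abs_mul, abs_of_nonneg (hw _)]
    _ ≤ (∫ x, w x ∂μ)⁻¹ * ∫ x, ((C + |a|) * S.indicator w x + η * w x) ∂μ :=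
        mul_le_mul_of_nonneg_left (integral_mono (hmul (hf.sub_const a).abs (by simpa using hfa))
          (((hwi.indicator hS).const_mul _).add (hwi.const_mul η)) hpt) (inv_nonneg.2 hZ.le)
    _ = (C + |a|) * ((∫ x, w x ∂μ)⁻¹ * ∫ x in S, w x ∂μ) + η := by
        rw [integral_add ((hwi.indicator hS).const_mul _) (hwi.const_mul η), integral_const_mul,
          integral_const_mul, integral_indicator hS]
        field_simp

theorem tendsto_weighted_average_of_concentration {w : ι → X → ℝ} {f : X → ℝ} {a C : ℝ}
    (hw : ∀ᶠ i in l, 0 ≤ w i ∧ Integrable (w i) μ ∧ 0 < ∫ x, w i x ∂μ)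
    (hf : Measurable f) (hfC : ∀ x, |f x| ≤ C)
    (hconc : ∀ η > 0, Tendsto (fun i => (∫ x, w i x ∂μ)⁻¹ * ∫ x in {x | η ≤ |f x - a|}, w i x ∂μ)
      l (𝓝 0)) :
    Tendsto (fun i => (∫ x, w i x ∂μ)⁻¹ * ∫ x, f x * w i x ∂μ) l (𝓝 a) := by
  rw [Metric.tendsto_nhds]
  intro ε hε
  have hbound : Tendsto (fun i => (C + |a|) * ((∫ x, w i x ∂μ)⁻¹ *
      ∫ x in {x | ε / 2 ≤ |f x - a|}, w i x ∂μ) + ε / 2) l (𝓝 (ε / 2)) := by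
    simpa using ((hconc (ε / 2) (half_pos hε)).const_mul (C + |a|)).add_const (ε / 2)
  filter_upwards [hw, hbound.eventually_lt_const (half_lt_self hε)] with i ⟨hw0, hwi, hZ⟩ hi
  exact (abs_weighted_average_sub_le hw0 hwi hZ hf hfC (half_pos hε).le).trans_lt hi

theorem tendsto_weighted_mass_of_subset {w : ι → X → ℝ}
    (hw : ∀ᶠ i in l, 0 ≤ w i ∧ Integrable (w i) μ) {s t : Set X} (hst : s ⊆ t)
    (ht : Tendsto (fun i => (∫ x, w i x ∂μ)⁻¹ * ∫ x in t, w i x ∂μ) l (𝓝 0)) :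
    Tendsto (fun i => (∫ x, w i x ∂μ)⁻¹ * ∫ x in s, w i x ∂μ) l (𝓝 0) := by
  refine squeeze_zero' ?_ ?_ ht
  all_goals filter_upwards [hw] with i ⟨hw0, hwi⟩
  · exact mul_nonneg (inv_nonneg.2 (integral_nonneg hw0)) (integral_nonneg hw0)
  · exact mul_le_mul_of_nonneg_left (setIntegral_mono_set hwi.integrableOn
      (Eventually.of_forall hw0) (Eventually.of_forall hst)) (inv_nonneg.2 (integral_nonneg hw0))

end WeightedAverage

section Laplace

variable {X : Type*} [MeasurableSpace X] {μ : Measure X} {ψ : X → ℝ} {m : ℝ}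

theorem integrable_exp_neg_mul_of_le (hψ : Measurable ψ) (hm : ∀ x, m ≤ ψ x)
    (hint : Integrable (fun x => exp (-ψ x)) μ) {t : ℝ} (ht : 1 ≤ t) :
    Integrable (fun x => exp (-t * ψ x)) μ := by
  refine (hint.const_mul (exp (-(t - 1) * m))).mono' (by fun_prop)
    (Eventually.of_forall fun x => ?_)
  rw [norm_of_nonneg (exp_pos _).le, ← exp_add]
  gcongr
  nlinarith [hm x]

theorem gibbs_mass_superlevel_le (hψ : Measurable ψ) (hm : ∀ x, m ≤ ψ x)
    (hint : Integrable (fun x => exp (-ψ x)) μ) {c : ℝ} {U : Set X} (hUm : MeasurableSet U)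
    (hU : ∀ x ∈ U, ψ x ≤ m + c / 2) (hU₀ : 0 < μ.real U) {t : ℝ} (ht : 1 ≤ t) :
    (∫ x, exp (-t * ψ x) ∂μ)⁻¹ * ∫ x in {x | m + c ≤ ψ x}, exp (-t * ψ x) ∂μ ≤
      (∫ x, exp (-ψ x) ∂μ) * exp (m + c) / μ.real U * exp (-(c / 2 * t)) := by
  have hti := integrable_exp_neg_mul_of_le hψ hm hint ht
  have hnum : ∫ x in {x | m + c ≤ ψ x}, exp (-t * ψ x) ∂μ ≤
      exp (-(t - 1) * (m + c)) * ∫ x, exp (-ψ x) ∂μ :=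
    calc ∫ x in {x | m + c ≤ ψ x}, exp (-t * ψ x) ∂μ
        ≤ ∫ x in {x | m + c ≤ ψ x}, exp (-(t - 1) * (m + c)) * exp (-ψ x) ∂μ := by
          refine setIntegral_mono_on hti.integrableOn (hint.const_mul _).integrableOn
            (measurableSet_le measurable_const hψ) fun x hx => ?_
          rw [← exp_add]
          gcongr
          nlinarith [hx.out]
      _ ≤ ∫ x, exp (-(t - 1) * (m + c)) * exp (-ψ x) ∂μ :=
          setIntegral_le_integral (hint.const_mul _) (Eventually.of_forall fun x => by positivity)
      _ = exp (-(t - 1) * (m + c)) * ∫ x, exp (-ψ x) ∂μ := integral_const_mul _ _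
  have hden : exp (-t * (m + c / 2)) * μ.real U ≤ ∫ x, exp (-t * ψ x) ∂μ :=
    calc exp (-t * (m + c / 2)) * μ.real U ≤ ∫ x in U, exp (-t * ψ x) ∂μ :=
          setIntegral_ge_of_const_le_real hUm (fun h => by simp [measureReal_def, h] at hU₀)
            (fun x hx => exp_le_exp.2 (by nlinarith [hU x hx])) hti.integrableOn
      _ ≤ ∫ x, exp (-t * ψ x) ∂μ :=
          setIntegral_le_integral hti (Eventually.of_forall fun x => by positivity)
  have hsplit : exp (-(t - 1) * (m + c)) =
      exp (-t * (m + c / 2)) * exp (m + c) * exp (-(c / 2 * t)) := by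
    rw [← exp_add, ← exp_add]
    ring_nf
  calc (∫ x, exp (-t * ψ x) ∂μ)⁻¹ * ∫ x in {x | m + c ≤ ψ x}, exp (-t * ψ x) ∂μ
      ≤ (exp (-t * (m + c / 2)) * μ.real U)⁻¹ *
          (exp (-(t - 1) * (m + c)) * ∫ x, exp (-ψ x) ∂μ) := by
        gcongr
    _ = (∫ x, exp (-ψ x) ∂μ) * exp (m + c) / μ.real U * exp (-(c / 2 * t)) := by
        rw [hsplit]
        field_simp

theorem tendsto_gibbs_mass_superlevel (hψ : Measurable ψ) (hm : ∀ x, m ≤ ψ x)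
    (hint : Integrable (fun x => exp (-ψ x)) μ) {c : ℝ} (hc : 0 < c) {U : Set X}
    (hUm : MeasurableSet U) (hU : ∀ x ∈ U, ψ x ≤ m + c / 2) (hU₀ : 0 < μ.real U) :
    Tendsto (fun t => (∫ x, exp (-t * ψ x) ∂μ)⁻¹ * ∫ x in {x | m + c ≤ ψ x}, exp (-t * ψ x) ∂μ)
      atTop (𝓝 0) := by
  have hdecay : Tendsto (fun t => (∫ x, exp (-ψ x) ∂μ) * exp (m + c) / μ.real U *
      exp (-(c / 2 * t))) atTop (𝓝 0) := by
    simpa using (tendsto_exp_neg_atTop_nhds_zero.comp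
      (tendsto_id.const_mul_atTop (half_pos hc))).const_mul _
  refine squeeze_zero' (Eventually.of_forall fun t => ?_) ?_ hdecay
  · exact mul_nonneg (inv_nonneg.2 (integral_nonneg fun x => (exp_pos _).le))
      (integral_nonneg fun x => (exp_pos _).le)
  · filter_upwards [eventually_ge_atTop 1] with t ht
    exact gibbs_mass_superlevel_le hψ hm hint hUm hU hU₀ ht

end Laplace

section Rotation

variable {G : ℂ → ℝ} {W : ℝ → ℝ}

theorem integral_rotate_mul_radial (θ : ℝ) :
    ∫ z : ℂ, G (Complex.exp (θ * Complex.I) * z) * W ‖z‖ = ∫ z : ℂ, G z * W ‖z‖ := by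
  set R := rotation (Circle.exp θ)
  rw [← R.measurePreserving.integral_comp R.toMeasurableEquiv.measurableEmbedding
    (fun z => G z * W ‖z‖)]
  congr 1 with z
  simp [R, rotation_apply, Circle.coe_exp]

theorem intervalIntegral_rotate_eq_circleAverage (z : ℂ) :
    ∫ θ in 0..2 * π, G (Complex.exp (θ * Complex.I) * z) = 2 * π * circleAverage G 0 ‖z‖ := by
  rw [circleAverage_eq_integral_add (Complex.arg z), smul_eq_mul, ← mul_assoc,
    mul_inv_cancel₀ two_pi_pos.ne', one_mul]
  congr 1 with θ
  rw [circleMap, zero_add, Complex.ofReal_add, add_mul, Complex.exp_add]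
  conv_lhs => rw [← Complex.norm_mul_exp_arg_mul_I z]
  ring_nf

theorem integral_mul_radial_eq_circleAverage (hG : Continuous G) {C : ℝ} (hGC : ∀ z, |G z| ≤ C)
    (hW : Continuous W) (hWi : Integrable (fun z : ℂ => W ‖z‖)) :
    ∫ z : ℂ, G z * W ‖z‖ = ∫ z : ℂ, circleAverage G 0 ‖z‖ * W ‖z‖ := by
  set F : ℝ → ℂ → ℝ := fun θ z => G (Complex.exp (θ * Complex.I) * z) * W ‖z‖
  have : IsFiniteMeasure (volume.restrict (uIoc 0 (2 * π))) :=
    isFiniteMeasure_restrict.2 (by rw [Real.volume_uIoc]; exact ENNReal.ofReal_ne_top)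
  have hF : Integrable (Function.uncurry F) ((volume.restrict (uIoc 0 (2 * π))).prod volume) := by
    refine ((integrable_const C).mul_prod hWi.abs).mono' (by fun_prop)
      (Eventually.of_forall fun p => ?_)
    simp only [Function.uncurry, F, norm_mul, norm_eq_abs]
    exact mul_le_mul_of_nonneg_right (hGC _) (abs_nonneg _)
  apply mul_left_cancel₀ two_pi_pos.ne'
  calc 2 * π * ∫ z : ℂ, G z * W ‖z‖ = ∫ θ in 0..2 * π, ∫ z, F θ z := by
        simp [F, integral_rotate_mul_radial]
    _ = ∫ z, ∫ θ in 0..2 * π, F θ z := intervalIntegral_integral_swap hF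
    _ = 2 * π * ∫ z : ℂ, circleAverage G 0 ‖z‖ * W ‖z‖ := by
        simp only [F, intervalIntegral.integral_mul_const, intervalIntegral_rotate_eq_circleAverage,
          mul_assoc, integral_const_mul]

end Rotation

theorem abs_circleAverage_le {G : ℂ → ℝ} (hG : Continuous G) {C : ℝ} (hGC : ∀ z, |G z| ≤ C)
    (c : ℂ) (r : ℝ) : |circleAverage G c r| ≤ C :=
  abs_circleAverage_le_circleAverage_abs.trans
    (circleAverage_mono_on_of_le_circle hG.abs.continuousOn.circleIntegrable' fun z _ => hGC z)

section RadialGibbs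

variable {V : ℝ → ℝ} {m r₀ : ℝ}

theorem eventually_radial_gibbs_weight (hV : Continuous V) (hm : ∀ r, m ≤ V r)
    (hint : Integrable (fun z : ℂ => exp (-V ‖z‖))) :
    ∀ᶠ t in atTop, (0 ≤ fun z : ℂ => exp (-t * V ‖z‖)) ∧
      Integrable (fun z : ℂ => exp (-t * V ‖z‖)) ∧ 0 < ∫ z : ℂ, exp (-t * V ‖z‖) := by
  filter_upwards [eventually_ge_atTop 1] with t ht
  have hi :=
    integrable_exp_neg_mul_of_le (hV.comp continuous_norm).measurable (fun z => hm _) hint ht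
  exact ⟨fun z => (exp_pos _).le, hi, integral_exp_pos hi⟩

theorem tendsto_radial_gibbs_mass_far (hV : Continuous V) (hm : ∀ r, m ≤ V r) (hr₀ : 0 ≤ r₀)
    (hVr₀ : V r₀ = m) (hsep : ∀ δ > 0, ∃ c > 0, ∀ r, 0 ≤ r → δ ≤ |r - r₀| → m + c ≤ V r)
    (hint : Integrable (fun z : ℂ => exp (-V ‖z‖))) {δ : ℝ} (hδ : 0 < δ) :
    Tendsto (fun t => (∫ z : ℂ, exp (-t * V ‖z‖))⁻¹ *
      ∫ z in {z : ℂ | δ ≤ |‖z‖ - r₀|}, exp (-t * V ‖z‖)) atTop (𝓝 0) := by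
  obtain ⟨c, hc, hcV⟩ := hsep δ hδ
  have hVn : Continuous fun z : ℂ => V ‖z‖ := hV.comp continuous_norm
  obtain ⟨ρ, hρ, hball⟩ := Metric.continuousAt_iff.1 hVn.continuousAt (c / 2) (half_pos hc)
  have hU : ∀ z ∈ Metric.ball (r₀ : ℂ) ρ, V ‖z‖ ≤ m + c / 2 := fun z hz => by
    have := hball hz
    rw [Complex.norm_real, norm_of_nonneg hr₀, hVr₀, Real.dist_eq] at this
    linarith [(abs_lt.1 this).2]
  have hU₀ : 0 < volume.real (Metric.ball (r₀ : ℂ) ρ) :=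
    ENNReal.toReal_pos (Metric.measure_ball_pos volume _ hρ).ne' measure_ball_lt_top.ne
  refine tendsto_weighted_mass_of_subset
    ((eventually_radial_gibbs_weight hV hm hint).mono fun _ h => ⟨h.1, h.2.1⟩)
    (fun z hz => hcV _ (norm_nonneg z) hz) ?_
  exact tendsto_gibbs_mass_superlevel hVn.measurable (fun z => hm _) hint hc measurableSet_ball
    hU hU₀

theorem tendsto_radial_gibbs_average (hV : Continuous V) (hm : ∀ r, m ≤ V r) (hr₀ : 0 ≤ r₀)
    (hVr₀ : V r₀ = m) (hsep : ∀ δ > 0, ∃ c > 0, ∀ r, 0 ≤ r → δ ≤ |r - r₀| → m + c ≤ V r)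
    (hint : Integrable (fun z : ℂ => exp (-V ‖z‖)))
    {G : ℂ → ℝ} (hG : Continuous G) {C : ℝ} (hGC : ∀ z, |G z| ≤ C) :
    Tendsto (fun t => (∫ z : ℂ, exp (-t * V ‖z‖))⁻¹ * ∫ z : ℂ, G z * exp (-t * V ‖z‖)) atTop
      (𝓝 (circleAverage G 0 r₀)) := by
  have hH : Continuous (circleAverage G 0) := hG.circleAverage
  have hw := eventually_radial_gibbs_weight hV hm hint
  have hconc : ∀ η > 0, Tendsto (fun t => (∫ z : ℂ, exp (-t * V ‖z‖))⁻¹ *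
      ∫ z in {z : ℂ | η ≤ |circleAverage G 0 ‖z‖ - circleAverage G 0 r₀|}, exp (-t * V ‖z‖))
      atTop (𝓝 0) := by
    intro η hη
    obtain ⟨δ, hδ, hHδ⟩ := Metric.continuousAt_iff.1 hH.continuousAt η hη
    refine tendsto_weighted_mass_of_subset (hw.mono fun _ h => ⟨h.1, h.2.1⟩) (fun z hz => ?_)
      (tendsto_radial_gibbs_mass_far hV hm hr₀ hVr₀ hsep hint hδ)
    by_contra hfar
    exact (not_le.2 (hHδ (not_le.1 hfar))) hz.out
  refine (tendsto_weighted_average_of_concentration hw (hH.comp continuous_norm).measurable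
    (fun z => abs_circleAverage_le hG hGC 0 ‖z‖) hconc).congr' ?_
  filter_upwards [hw] with t ⟨_, hwi, _⟩
  exact congrArg _ (integral_mul_radial_eq_circleAverage (W := fun r => exp (-t * V r)) hG hGC
    (by fun_prop) hwi).symm

end RadialGibbs

section QuarticPotential

variable {α β : ℝ}

theorem quartic_potential_eq (hβ : 0 < β) (r : ℝ) :
    β * r ^ 4 / 4 - α * r ^ 2 / 2 = -(α ^ 2 / (4 * β)) + β / 4 * (r ^ 2 - α / β) ^ 2 := by
  field_simp
  ring

theorem integrable_exp_neg_quartic_potential (hβ : 0 < β) :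
    Integrable (fun z : ℂ => exp (-(β * ‖z‖ ^ 4 / 4 - α * ‖z‖ ^ 2 / 2))) := by
  have hgauss : Integrable (fun z : ℂ => exp (-‖z‖ ^ 2)) := by
    simpa [Complex.norm_exp, ← Complex.ofReal_pow] using
      (GaussianFourier.integrable_cexp_neg_mul_sq_norm_add (V := ℂ) (b := 1) (by simp) 0 0).norm
  refine (hgauss.const_mul (exp ((α + 2) ^ 2 / (4 * β)))).mono' (by fun_prop)
    (Eventually.of_forall fun z => ?_)
  rw [norm_of_nonneg (exp_pos _).le, ← exp_add]
  gcongr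
  have hsq : β * ‖z‖ ^ 4 / 4 - α * ‖z‖ ^ 2 / 2 - ‖z‖ ^ 2 + (α + 2) ^ 2 / (4 * β) =
      β / 4 * (‖z‖ ^ 2 - (α + 2) / β) ^ 2 := by
    field_simp
    ring
  nlinarith [mul_nonneg hβ.le (sq_nonneg (‖z‖ ^ 2 - (α + 2) / β))]

theorem quartic_potential_separated (hα : 0 < α) (hβ : 0 < β) {δ : ℝ} (hδ : 0 < δ) :
    ∃ c > 0, ∀ r, 0 ≤ r → δ ≤ |r - √(α / β)| →
      -(α ^ 2 / (4 * β)) + c ≤ β * r ^ 4 / 4 - α * r ^ 2 / 2 := by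
  set r₀ := √(α / β)
  have hr₀ : 0 < r₀ := sqrt_pos.2 (div_pos hα hβ)
  refine ⟨β / 4 * (δ * r₀) ^ 2, by positivity, fun r hr hδr => ?_⟩
  rw [quartic_potential_eq hβ, ← sq_sqrt (div_pos hα hβ).le]
  have hfactor : (δ * r₀) ^ 2 ≤ (r ^ 2 - r₀ ^ 2) ^ 2 := by
    rw [← sq_abs (r ^ 2 - r₀ ^ 2), show r ^ 2 - r₀ ^ 2 = (r - r₀) * (r + r₀) by ring, abs_mul,
      abs_of_pos (by positivity : 0 < r + r₀)]
    gcongr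
    linarith
  gcongr

theorem tendsto_quartic_gibbs_average (hα : 0 < α) (hβ : 0 < β) {G : ℂ → ℝ} (hG : Continuous G)
    {C : ℝ} (hGC : ∀ z, |G z| ≤ C) :
    Tendsto (fun t => (∫ z : ℂ, exp (-t * (β * ‖z‖ ^ 4 / 4 - α * ‖z‖ ^ 2 / 2)))⁻¹ *
        ∫ z : ℂ, G z * exp (-t * (β * ‖z‖ ^ 4 / 4 - α * ‖z‖ ^ 2 / 2)))
      atTop (𝓝 (circleAverage G 0 √(α / β))) := by
  refine tendsto_radial_gibbs_average (V := fun r => β * r ^ 4 / 4 - α * r ^ 2 / 2) (by fun_prop)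
    (fun r => ?_) (sqrt_nonneg _) ?_ (fun δ hδ => quartic_potential_separated hα hβ hδ)
    (integrable_exp_neg_quartic_potential hβ) hG hGC
  · rw [quartic_potential_eq hβ]
    have := mul_nonneg hβ.le (sq_nonneg (r ^ 2 - α / β))
    linarith
  · rw [quartic_potential_eq hβ, sq_sqrt (div_pos hα hβ).le]
    simp

end QuarticPotential

theorem circPt_eq_repr_circleMap (α β θ : ℝ) :
    circPt α β θ = Complex.orthonormalBasisOneI.repr (circleMap 0 √(α / β) θ) := by
  ext i
  fin_cases i <;> simp [circPt, circleMap, Complex.exp_mul_I, ← Complex.ofReal_cos,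
    ← Complex.ofReal_sin]

theorem tendsto_two_div_sq_nhdsGT_zero : Tendsto (fun A : ℝ => 2 / A ^ 2) (𝓝[>] 0) atTop := by
  have hsq : Tendsto (fun A : ℝ => A ^ 2) (𝓝[>] 0) (𝓝[>] 0) :=
    tendsto_nhdsWithin_of_tendsto_nhds_of_eventually_within _
      (((continuous_pow 2).tendsto' (0 : ℝ) 0 (by simp)).mono_left nhdsWithin_le_nhds)
      (eventually_nhdsWithin_of_forall fun A hA => mem_Ioi.2 (pow_pos hA 2))
  simpa [div_eq_mul_inv] using (tendsto_inv_nhdsGT_zero.comp hsq).const_mul_atTop two_pos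

/-- As `A → 0⁺`, the normalized equilibrium measures with density proportional to
`exp(-(2/A²)(β|v|⁴/4 - α|v|²/2))` converge weakly (i.e. tested against every bounded
continuous function) to the uniform probability measure on the circle `{|v| = √(α/β)}`. -/
theorem stmt19 (α β : ℝ) (hα : 0 < α) (hβ : 0 < β)
    (g : EuclideanSpace ℝ (Fin 2) → ℝ) (hg : Continuous g) (hgb : ∃ Cb, ∀ v, |g v| ≤ Cb) :
    Filter.Tendsto
      (fun A : ℝ =>
        (∫ v : EuclideanSpace ℝ (Fin 2),
            Real.exp (-(2 / A ^ 2) * (β * ‖v‖ ^ 4 / 4 - α * ‖v‖ ^ 2 / 2)))⁻¹ *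
          ∫ v : EuclideanSpace ℝ (Fin 2),
            g v * Real.exp (-(2 / A ^ 2) * (β * ‖v‖ ^ 4 / 4 - α * ‖v‖ ^ 2 / 2)))
      (nhdsWithin 0 (Set.Ioi 0))
      (nhds ((2 * π)⁻¹ * ∫ θ in (0 : ℝ)..(2 * π), g (circPt α β θ))) := by
  obtain ⟨C, hC⟩ := hgb
  set e := Complex.orthonormalBasisOneI.repr
  have hrepr (f : EuclideanSpace ℝ (Fin 2) → ℝ) : ∫ z : ℂ, f (e z) = ∫ v, f v :=
    Complex.orthonormalBasisOneI.measurePreserving_repr.integral_comp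
      e.toMeasurableEquiv.measurableEmbedding f
  have hcirc : circleAverage (g ∘ e) 0 √(α / β) =
      (2 * π)⁻¹ * ∫ θ in (0 : ℝ)..(2 * π), g (circPt α β θ) := by
    simp only [circleAverage_def, smul_eq_mul, Function.comp_apply, circPt_eq_repr_circleMap, e]
  have hlim := (tendsto_quartic_gibbs_average hα hβ (hg.comp e.continuous) (fun z => hC (e z))).comp
    tendsto_two_div_sq_nhdsGT_zero
  rw [hcirc] at hlim
  refine hlim.congr fun A => ?_
  simp only [Function.comp_apply, ← hrepr, e.norm_map]
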